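/- Let F : ℂ^n → ℂ^n be of the form F = Id − F_{(k)} where F_{(k)} has components homogeneous of degree k ≥ 2, and suppose the Jacobian determinant of F is identically 1. Then the Jacobian matrix of F_{(k)} is nilpotent at every point. -/

import Mathlib

open MvPolynomial

/-- The Jacobian matrix of a polynomial map at a point. -/
noncomputable def jac {σ : Type*} [Fintype σ] [DecidableEq σ]
    (P : σ → MvPolynomial σ ℂ) (x : σ → ℂ) : Matrix σ σ ℂ :=
  Matrix.of fun i j => eval x (pderiv j (P i))

lemma eval_smul_of_isHomogeneous {n m : ℕ} (p : MvPolynomial (Fin n) ℂ)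
    (hp : p.IsHomogeneous m) (c : ℂ) (x : Fin n → ℂ) :
    eval (c • x) p = c ^ m * eval x p := by
  rw [eval_eq', eval_eq', Finset.mul_sum]
  refine Finset.sum_congr rfl fun d hd => ?_
  have h1 : d.degree = m := by
    rw [Finsupp.degree_eq_weight_one]
    exact hp (mem_support_iff.mp hd)
  have h2 : ∑ i, d i = m := by
    rw [← h1, Finsupp.degree]
    exact (Finset.sum_subset (Finset.subset_univ _) fun i _ hi =>
      Finsupp.notMem_support_iff.mp hi).symm
  have : ∀ i : Fin n, (c • x) i ^ d i = c ^ d i * x i ^ d i := by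
    intro i; rw [Pi.smul_apply, smul_eq_mul, mul_pow]
  rw [Finset.prod_congr rfl fun i _ => this i, Finset.prod_mul_distrib,
    Finset.prod_pow_eq_pow_sum, h2]
  ring

lemma isHomogeneous_pderiv {n k : ℕ} (p : MvPolynomial (Fin n) ℂ)
    (hp : p.IsHomogeneous k) (j : Fin n) :
    (pderiv j p).IsHomogeneous (k - 1) := by
  rw [p.as_sum, map_sum]
  apply MvPolynomial.IsHomogeneous.sum
  intro d hd
  rw [pderiv_monomial]
  by_cases h : d j = 0
  · rw [h]; simp only [Nat.cast_zero, mul_zero, map_zero]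
    exact isHomogeneous_zero _ _ _
  · apply isHomogeneous_monomial
    have hdd : d.degree = k := by
      rw [Finsupp.degree_eq_weight_one]
      exact hp (mem_support_iff.mp hd)
    have hle : Finsupp.single j 1 ≤ d := Finsupp.single_le_iff.mpr (Nat.one_le_iff_ne_zero.mpr h)
    have hadd : (d - Finsupp.single j 1) + Finsupp.single j 1 = d := tsub_add_cancel_of_le hle
    have hw : Finsupp.degree (d - Finsupp.single j 1) + Finsupp.degree (Finsupp.single j 1) = k := by
      rw [Finsupp.degree_eq_weight_one, ← map_add, hadd, ← Finsupp.degree_eq_weight_one, hdd]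
    have hsingle : Finsupp.degree (Finsupp.single j (1 : ℕ)) = 1 := by
      rw [Finsupp.degree_apply, Finsupp.support_single_ne_zero _ one_ne_zero]
      simp
    omega

/-- If `F = Id − F_{(k)}`, where the components of `F_{(k)}` are homogeneous of degree
`k ≥ 2`, has Jacobian determinant identically `1`, then the Jacobian matrix of `F_{(k)}`
is nilpotent at every point. -/
theorem jacobian_nilpotent_of_id_sub_homogeneous (n k : ℕ) (hk : 2 ≤ k)
    (Fk : Fin n → MvPolynomial (Fin n) ℂ)
    (hhom : ∀ i, (Fk i).IsHomogeneous k)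
    (hdet : ∀ x : Fin n → ℂ, (jac (fun i => X i - Fk i) x).det = 1) :
    ∀ x : Fin n → ℂ, jac Fk x ^ n = 0 := by
  intro x
  set A := jac Fk x with hA
  have hjac : ∀ y, jac (fun i => X i - Fk i) y = 1 - jac Fk y := by
    intro y
    ext i j
    simp only [jac, Matrix.of_apply, map_sub, Matrix.sub_apply, Matrix.one_apply]
    rw [pderiv_X]
    rcases eq_or_ne i j with h | h
    · subst h; simp
    · simp [Pi.single_apply, (Ne.symm h), h]
  have hscale : ∀ t : ℂ, jac Fk (t • x) = t ^ (k - 1) • jac Fk x := by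
    intro t
    ext i j
    simp only [jac, Matrix.of_apply, Matrix.smul_apply, smul_eq_mul]
    exact eval_smul_of_isHomogeneous _ (isHomogeneous_pderiv _ (hhom i) j) t x
  have hdet1 : ∀ s : ℂ, (1 - s • A).det = 1 := by
    intro s
    obtain ⟨t, ht⟩ := IsAlgClosed.exists_pow_nat_eq (k := ℂ) s (n := k - 1) (by omega)
    have h := hdet (t • x)
    rw [hjac, hscale, ht] at h
    exact h
  have hrev : A.charpolyRev = 1 := by
    apply Polynomial.funext
    intro s
    rw [Matrix.charpolyRev, ← Polynomial.coe_evalRingHom, RingHom.map_det,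
      RingHom.mapMatrix_apply]
    have hmap : (1 - (Polynomial.X : Polynomial ℂ) • A.map Polynomial.C).map
        (⇑(Polynomial.evalRingHom s)) = 1 - s • A := by
      ext i j
      rcases eq_or_ne i j with h | h <;>
        simp [h, Matrix.one_apply, mul_comm s]
    rw [hmap, hdet1, map_one]
  have hcp : A.charpoly = Polynomial.X ^ n := by
    have h1 : A.charpoly.reverse = 1 := by rw [Matrix.reverse_charpoly, hrev]
    have hdeg : A.charpoly.natDegree = n := by
      rw [Matrix.charpoly_natDegree_eq_dim, Fintype.card_fin]
    have h2 : Polynomial.reflect n A.charpoly.reverse = A.charpoly := by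
      ext i
      rw [Polynomial.coeff_reflect, Polynomial.reverse, hdeg, Polynomial.coeff_reflect,
        Polynomial.revAt_invol]
    rw [← h2, h1, Polynomial.reflect_one]
  have h := Matrix.aeval_self_charpoly A
  rwa [hcp, map_pow, Polynomial.aeval_X] at h
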